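/- Let ζ ∈ ℂ be a primitive m-th root of unity and let m₁,…,m_n be natural numbers such that (ζ; m₁,…,m_n) is generic. Let {I₁,…,I_l} be a partition of {1,…,n} into l nonempty pairwise disjoint blocks, and let N be a positive integer with N ≡ −1 (mod m). Then the sum over all l-tuples (k₁,…,k_l) of pairwise distinct elements of {1,…,N} of the products ∏_{j=1}^{l} ∏_{s∈I_j} (ζ^{k_j m_s} + ζ^{−k_j m_s}) equals (−1)^l · l! · 2^n. -/

import Mathlib

def Generic (ζ : ℂ) {n : ℕ} (m : Fin n → ℕ) : Prop :=
  (∀ J L : Finset (Fin n), Disjoint J L → (J.Nonempty ∨ L.Nonempty) →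
    ∏ j ∈ J, ζ ^ m j ≠ ∏ l ∈ L, ζ ^ m l) ∧
  ∀ i, ζ ^ (2 * m i) ≠ 1

open Finset Function

/-!
Expanding `∏_{s ∈ A} (ζ^{k m_s} + ζ^{-k m_s})` gives `2^|A|` terms `x^k`; genericity makes each
`x ≠ 1`, while `x^{N+1} = 1` because `m ∣ N + 1`, so summing over `k ∈ [1, N]` gives `-2^|A|`
for every nonempty `A`.

The sum over injective tuples is then computed by induction on the number of blocks. Summing the
first coordinate over `[1, N]` minus the values taken by the other coordinates gives `-2^|I₀|`
times the sum for the remaining `l` blocks, minus `l` sums in which `I₀` is merged into one of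
those blocks. By induction each of these `l + 1` sums equals `(-1)^l l! 2^n`, with `n` the total
size of the blocks, whence `(-1)^{l+1} (l+1)! 2^n`.
-/

section
variable {ι κ α : Type*} [DecidableEq ι] [DecidableEq α]

theorem sum_injective_piFinset_succ {M : Type*} [AddCommMonoid M] {l : ℕ} (S : Finset α)
    (G : (Fin (l + 1) → α) → M) :
    ∑ k ∈ {k ∈ Fintype.piFinset fun _ => S | Injective k}, G k =
      ∑ k ∈ {k ∈ Fintype.piFinset fun _ => S | Injective k},
        ∑ x ∈ S \ univ.image k, G (Fin.cons x k) := by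
  rw [sum_sigma']
  refine sum_nbij' (fun k => ⟨Fin.tail k, k 0⟩) (fun p => Fin.cons p.2 p.1) ?_ ?_ ?_ ?_ ?_
  · intro k hk
    have hinj : Injective (Fin.cons (k 0) (Fin.tail k) : Fin (l + 1) → α) := by
      rw [Fin.cons_self_tail]; exact (mem_filter.1 hk).2
    rw [Fin.cons_injective_iff] at hinj
    simp_all [Fin.forall_fin_succ, Fin.tail]
  · rintro ⟨k, x⟩ hp
    simp_all [Fin.cons_injective_iff, Fin.forall_fin_succ]
  · intro k _; simp
  · intro p _; simp
  · intro k _; simp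

theorem sum_injective_piFinset_succ_mul {R : Type*} [CommRing R] {l : ℕ} (S : Finset α)
    (F : α → R) (P : (Fin l → α) → R) :
    ∑ k ∈ {k ∈ Fintype.piFinset fun _ => S | Injective k}, F (k 0) * P (Fin.tail k) =
      ∑ k ∈ {k ∈ Fintype.piFinset fun _ => S | Injective k},
        (∑ x ∈ S, F x - ∑ j, F (k j)) * P k := by
  rw [sum_injective_piFinset_succ]
  refine sum_congr rfl fun k hk => ?_
  obtain ⟨hkS, hinj⟩ := mem_filter.1 hk
  have himage : univ.image k ⊆ S := image_subset_iff.2 fun j _ => Fintype.mem_piFinset.1 hkS j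
  simp only [Fin.cons_zero, Fin.tail_cons]
  rw [← sum_mul, sum_sdiff_eq_sub himage, sum_image hinj.injOn]

theorem pairwise_disjoint_update_union [DecidableEq κ] {B : κ → Finset ι}
    (hB : Pairwise (Disjoint on B)) {A : Finset ι} (hA : ∀ i, Disjoint A (B i)) (j : κ) :
    Pairwise (Disjoint on update B j (A ∪ B j)) := by
  intro i i' hii
  simp only [onFun, update_apply]
  split_ifs with hi hi' hi'
  · exact absurd (hi.trans hi'.symm) hii
  · subst hi; exact disjoint_union_left.2 ⟨hA i', hB hii⟩
  · subst hi'; exact disjoint_union_right.2 ⟨(hA i).symm, hB hii⟩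
  · exact hB hii

theorem prod_prod_update_union [DecidableEq κ] [Fintype κ] {R : Type*} [CommMonoid R]
    (g : κ → ι → R) (B : κ → Finset ι) {A : Finset ι} (j : κ) (hA : Disjoint A (B j)) :
    ∏ i, ∏ s ∈ update B j (A ∪ B j) i, g i s = (∏ s ∈ A, g j s) * ∏ i, ∏ s ∈ B i, g i s := by
  rw [← mul_prod_erase univ _ (mem_univ j),
    ← mul_prod_erase univ (fun i => ∏ s ∈ B i, g i s) (mem_univ j), update_self, prod_union hA,
    mul_assoc]
  congr 2
  exact prod_congr rfl fun i hi => by rw [update_of_ne (ne_of_mem_erase hi)]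

theorem sum_injective_prod_blocks {R : Type*} [CommRing R] (S : Finset α) (f : ι → α → R)
    (c : ι → R) (hS : ∀ A : Finset ι, A.Nonempty → ∑ x ∈ S, ∏ s ∈ A, f s x = -∏ s ∈ A, c s)
    {l : ℕ} (I : Fin l → Finset ι) (hne : ∀ j, (I j).Nonempty) (hdisj : Pairwise (Disjoint on I)) :
    ∑ k ∈ {k ∈ Fintype.piFinset fun _ => S | Injective k}, ∏ j, ∏ s ∈ I j, f s (k j) =
      (-1) ^ l * l.factorial * ∏ j, ∏ s ∈ I j, c s := by
  induction l with
  | zero =>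
    rw [filter_true_of_mem fun k _ => injective_of_subsingleton k]
    simp
  | succ l ih =>
    set P : (Fin l → α) → R := fun k => ∏ j, ∏ s ∈ I j.succ, f s (k j)
    set W := ∏ j : Fin l, ∏ s ∈ I j.succ, c s
    set T := {k ∈ Fintype.piFinset fun (_ : Fin l) => S | Injective k}
    have hdisj_tail : Pairwise (Disjoint on fun j : Fin l => I j.succ) :=
      fun i i' h => hdisj (Fin.succ_injective _ |>.ne h)
    have hdisj_zero : ∀ j : Fin l, Disjoint (I 0) (I j.succ) :=
      fun j => hdisj (Fin.succ_ne_zero j).symm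
    have htail : ∑ k ∈ T, P k = (-1) ^ l * l.factorial * W := ih _ (fun j => hne _) hdisj_tail
    have hmerge : ∀ j : Fin l, ∑ k ∈ T, (∏ s ∈ I 0, f s (k j)) * P k =
        (-1) ^ l * l.factorial * ((∏ s ∈ I 0, c s) * W) := by
      intro j
      have hJne : ∀ i, (update (fun i => I i.succ) j (I 0 ∪ I j.succ) i).Nonempty := fun i => by
        rw [update_apply]; split_ifs
        exacts [(hne 0).mono subset_union_left, hne _]
      calc ∑ k ∈ T, (∏ s ∈ I 0, f s (k j)) * P k
          = ∑ k ∈ T, ∏ i, ∏ s ∈ update (fun i => I i.succ) j (I 0 ∪ I j.succ) i, f s (k i) :=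
            sum_congr rfl fun k _ =>
              (prod_prod_update_union (fun i s => f s (k i)) _ j (hdisj_zero j)).symm
        _ = (-1) ^ l * l.factorial * ((∏ s ∈ I 0, c s) * W) := by
            rw [ih _ hJne (pairwise_disjoint_update_union hdisj_tail hdisj_zero j),
              prod_prod_update_union (fun _ s => c s) _ j (hdisj_zero j)]
    calc ∑ k ∈ {k ∈ Fintype.piFinset fun _ => S | Injective k}, ∏ j, ∏ s ∈ I j, f s (k j)
        = ∑ k ∈ T, (-(∏ s ∈ I 0, c s) - ∑ j, ∏ s ∈ I 0, f s (k j)) * P k := by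
          simp only [Fin.prod_univ_succ]
          rw [← hS _ (hne 0)]
          exact sum_injective_piFinset_succ_mul S (fun x => ∏ s ∈ I 0, f s x) P
      _ = -(∏ s ∈ I 0, c s) * ∑ k ∈ T, P k - ∑ j, ∑ k ∈ T, (∏ s ∈ I 0, f s (k j)) * P k := by
          simp only [sub_mul, sum_sub_distrib, mul_sum, sum_mul]
          rw [sum_comm]
      _ = (-1) ^ (l + 1) * (l + 1).factorial * ∏ j, ∏ s ∈ I j, c s := by
          rw [htail, sum_congr rfl fun j _ => hmerge j, Fin.prod_univ_succ]
          simp [Nat.factorial_succ]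
          ring
end

theorem geom_sum_Icc_one_eq_neg_one {K : Type*} [Field K] {x : K} {N : ℕ} (hx : x ≠ 1)
    (hxN : x ^ (N + 1) = 1) : ∑ k ∈ Icc 1 N, x ^ k = -1 := by
  rw [← Ico_add_one_right_eq_Icc, geom_sum_Ico hx (by omega), hxN, pow_one, ← neg_sub, neg_div,
    div_self (sub_ne_zero.2 hx)]

theorem prod_pow_add_pow {ι R : Type*} [DecidableEq ι] [CommSemiring R] (a b : ι → R)
    (A : Finset ι) (k : ℕ) :
    ∏ s ∈ A, (a s ^ k + b s ^ k) = ∑ J ∈ A.powerset, ((∏ s ∈ J, a s) * ∏ s ∈ A \ J, b s) ^ k := by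
  simp only [prod_add, mul_pow, prod_pow]

theorem Generic.prod_mul_prod_inv_ne_one {ζ : ℂ} {n : ℕ} {mm : Fin n → ℕ} (hgen : Generic ζ mm)
    (hζ : ζ ≠ 0) {A J : Finset (Fin n)} (hA : A.Nonempty) :
    (∏ s ∈ J, ζ ^ mm s) * ∏ s ∈ A \ J, ζ⁻¹ ^ mm s ≠ 1 := by
  have hnonempty : J.Nonempty ∨ (A \ J).Nonempty :=
    or_iff_not_imp_left.2 fun hJ => by rwa [not_nonempty_iff_eq_empty.1 hJ, sdiff_empty]
  simp only [inv_pow, prod_inv_distrib]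
  rw [Ne, mul_inv_eq_one₀ (prod_ne_zero_iff.2 fun s _ => pow_ne_zero _ hζ)]
  exact hgen.1 J (A \ J) disjoint_sdiff hnonempty

theorem Generic.sum_Icc_prod_pow_add_inv_pow {ζ : ℂ} {n : ℕ} {mm : Fin n → ℕ}
    (hgen : Generic ζ mm) {N : ℕ} (hζN : ζ ^ (N + 1) = 1) {A : Finset (Fin n)}
    (hA : A.Nonempty) :
    ∑ k ∈ Icc 1 N, ∏ s ∈ A, (ζ ^ (k * mm s) + ζ⁻¹ ^ (k * mm s)) = -∏ _s ∈ A, 2 := by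
  have hζ : ζ ≠ 0 := by rintro rfl; simp at hζN
  have hroot : ∀ J ∈ A.powerset,
      ((∏ s ∈ J, ζ ^ mm s) * ∏ s ∈ A \ J, ζ⁻¹ ^ mm s) ^ (N + 1) = 1 := by
    intro J _
    simp only [mul_pow, ← prod_pow, inv_pow, pow_right_comm _ _ (N + 1), hζN, one_pow,
      prod_const_one, inv_one, mul_one]
  simp_rw [mul_comm _ (mm _), pow_mul, prod_pow_add_pow]
  rw [sum_comm, sum_congr rfl fun J hJ =>
    geom_sum_Icc_one_eq_neg_one (hgen.prod_mul_prod_inv_ne_one hζ hA) (hroot J hJ)]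
  simp [card_powerset]

theorem statement10_general {m : ℕ} {ζ : ℂ} (hζ : IsPrimitiveRoot ζ m)
    {n : ℕ} (mm : Fin n → ℕ) (hgen : Generic ζ mm)
    {l : ℕ} (I : Fin l → Finset (Fin n))
    (hne : ∀ j, (I j).Nonempty)
    (hdisj : ∀ i j, i ≠ j → Disjoint (I i) (I j))
    (hcover : ∀ s : Fin n, ∃ j, s ∈ I j)
    (N : ℕ) (hNm : (N : ZMod m) = -1) :
    ∑ k ∈ (Fintype.piFinset fun _ : Fin l => Finset.Icc 1 N).filter
        (fun k => Function.Injective k),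
      ∏ j : Fin l, ∏ s ∈ I j, (ζ ^ (k j * mm s) + ζ⁻¹ ^ (k j * mm s)) =
      (-1 : ℂ) ^ l * (l.factorial : ℂ) * 2 ^ n := by
  have hζN : ζ ^ (N + 1) = 1 :=
    (hζ.pow_eq_one_iff_dvd _).2 <| (ZMod.natCast_eq_zero_iff _ _).1 <| by
      push_cast; rw [hNm]; ring
  have hblocks : univ.biUnion I = univ := eq_univ_of_forall fun s => mem_biUnion.2 <| by
    simpa using hcover s
  rw [sum_injective_prod_blocks (Icc 1 N) _ (fun _ => 2)
      (fun A hA => hgen.sum_Icc_prod_pow_add_inv_pow hζN hA) I hne hdisj,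
    ← prod_biUnion fun i _ j _ h => hdisj i j h, hblocks, prod_const, card_univ, Fintype.card_fin]

theorem statement10 {m : ℕ} {ζ : ℂ} (hζ : IsPrimitiveRoot ζ m)
    {n : ℕ} (mm : Fin n → ℕ) (hgen : Generic ζ mm)
    {l : ℕ} (I : Fin l → Finset (Fin n))
    (hne : ∀ j, (I j).Nonempty)
    (hdisj : ∀ i j, i ≠ j → Disjoint (I i) (I j))
    (hcover : ∀ s : Fin n, ∃ j, s ∈ I j)
    (N : ℕ) (hN : 0 < N) (hNm : (N : ZMod m) = -1) :
    ∑ k ∈ (Fintype.piFinset fun _ : Fin l => Finset.Icc 1 N).filter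
        (fun k => Function.Injective k),
      ∏ j : Fin l, ∏ s ∈ I j, (ζ ^ (k j * mm s) + ζ⁻¹ ^ (k j * mm s)) =
      (-1 : ℂ) ^ l * (l.factorial : ℂ) * 2 ^ n :=
  statement10_general hζ mm hgen I hne hdisj hcover N hNm
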